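/- arXiv:2310.14999 — 3 statements merged into one kernel-verified Lean document; each statement's English description precedes it below -/
import Mathlib

section
/- Let δ > 0 and ℓ ∈ ℕ, and let f : [0,∞) → ℝ be ℓ-times differentiable. Define g(y) = f(y/δ). Then ‖g^{(ℓ)}‖_{ℓ,δ} ≤ sup_{z≥0} z^ℓ |f^{(ℓ)}(z)|, where ‖h‖_{ℓ,δ} = sup_{y≥0} (y/(1+y))^ℓ (δ⁻¹ e^{−y/δ} + 1)⁻¹ |h(y)|. In particular the bound is independent of δ. -/
/-- The generator norm `‖h‖_{ℓ,δ} = sup_{y≥0} (y/(1+y))^ℓ (δ⁻¹ e^{−y/δ} + 1)⁻¹ |h(y)|`. -/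
noncomputable def genNorm (δ : ℝ) (ℓ : ℕ) (h : ℝ → ℝ) : ENNReal :=
  ⨆ y ∈ Set.Ici (0 : ℝ),
    ENNReal.ofReal ((y / (1 + y)) ^ ℓ * (δ⁻¹ * Real.exp (-(y / δ)) + 1)⁻¹ * |h y|)

/-- For a boundary-layer function `g(y) = f(y/δ)` one has
`‖g^{(ℓ)}‖_{ℓ,δ} ≤ sup_{z≥0} z^ℓ |f^{(ℓ)}(z)|`, uniformly in `δ`. -/
theorem genNorm_boundaryLayer (δ : ℝ) (hδ : 0 < δ) (ℓ : ℕ) (f : ℝ → ℝ)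
    (hf : ContDiff ℝ (ℓ : ℕ∞) f) :
    genNorm δ ℓ (iteratedDeriv ℓ (fun y => f (y / δ))) ≤
      ⨆ z ∈ Set.Ici (0 : ℝ), ENNReal.ofReal (z ^ ℓ * |iteratedDeriv ℓ f z|) := by
  have key : iteratedDeriv ℓ (fun y => f (y / δ)) =
      fun y => δ⁻¹ ^ ℓ * iteratedDeriv ℓ f (δ⁻¹ * y) := by
    have := iteratedDeriv_comp_const_mul hf δ⁻¹
    simpa [div_eq_inv_mul] using this
  rw [genNorm, key]
  refine iSup₂_le fun y hy => ?_
  have hy0 : (0:ℝ) ≤ y := hy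
  have hz : δ⁻¹ * y ∈ Set.Ici (0:ℝ) := mul_nonneg (inv_nonneg.2 hδ.le) hy0
  refine le_trans ?_ (le_iSup₂ (f := fun z _ =>
    ENNReal.ofReal (z ^ ℓ * |iteratedDeriv ℓ f z|)) (δ⁻¹ * y) hz)
  apply ENNReal.ofReal_le_ofReal
  have habs : |δ⁻¹ ^ ℓ * iteratedDeriv ℓ f (δ⁻¹ * y)| =
      δ⁻¹ ^ ℓ * |iteratedDeriv ℓ f (δ⁻¹ * y)| := by
    rw [abs_mul, abs_of_nonneg (pow_nonneg (inv_nonneg.2 hδ.le) ℓ)]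
  rw [habs]
  have h1 : (y / (1 + y)) ^ ℓ * (δ⁻¹ * Real.exp (-(y / δ)) + 1)⁻¹ * δ⁻¹ ^ ℓ ≤
      (δ⁻¹ * y) ^ ℓ := by
    have hinv : (δ⁻¹ * Real.exp (-(y / δ)) + 1)⁻¹ ≤ 1 := by
      rw [inv_le_one_iff₀]
      right
      nlinarith [Real.exp_pos (-(y / δ)), inv_pos.2 hδ]
    have h2 : (y / (1 + y)) ^ ℓ ≤ y ^ ℓ := by
      apply pow_le_pow_left₀ (div_nonneg hy0 (by linarith)) 
      rw [div_le_iff₀ (by linarith : (0:ℝ) < 1 + y)]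
      nlinarith
    calc (y / (1 + y)) ^ ℓ * (δ⁻¹ * Real.exp (-(y / δ)) + 1)⁻¹ * δ⁻¹ ^ ℓ
        ≤ y ^ ℓ * 1 * δ⁻¹ ^ ℓ := by
          apply mul_le_mul_of_nonneg_right _ (pow_nonneg (inv_nonneg.2 hδ.le) ℓ)
          exact mul_le_mul h2 hinv (inv_nonneg.2 (by positivity))
            (pow_nonneg hy0 ℓ)
      _ = (δ⁻¹ * y) ^ ℓ := by rw [mul_one, mul_pow, mul_comm]
  calc (y / (1 + y)) ^ ℓ * (δ⁻¹ * Real.exp (-(y / δ)) + 1)⁻¹ *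
        (δ⁻¹ ^ ℓ * |iteratedDeriv ℓ f (δ⁻¹ * y)|)
      = (y / (1 + y)) ^ ℓ * (δ⁻¹ * Real.exp (-(y / δ)) + 1)⁻¹ * δ⁻¹ ^ ℓ *
        |iteratedDeriv ℓ f (δ⁻¹ * y)| := by ring
    _ ≤ (δ⁻¹ * y) ^ ℓ * |iteratedDeriv ℓ f (δ⁻¹ * y)| :=
        mul_le_mul_of_nonneg_right h1 (abs_nonneg _)
end

section
/- For every integer k ≥ 1, sup_{y>0} (y/(1+y))^k |d^k/dy^k e^{−1/y}| ≤ k! · Σ_{j=0}^{k−1} (1/(j+1)!) · C(k−1, j) · ((j+1)/e)^{j+1}, where C(k−1,j) denotes the binomial coefficient. -/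
noncomputable def aa : ℕ → ℕ → ℝ
  | 0, 0 => 1
  | 0, _+1 => 0
  | _+1, 0 => 0
  | (k+1), (i+1) => aa k i + (k+i+1) * aa k (i+1)

lemma aa_succ (k i : ℕ) : aa (k+1) (i+1) = aa k i + (k+i+1) * aa k (i+1) := rfl

lemma aa_zero (k : ℕ) : aa (k+1) 0 = 0 := rfl

lemma aa_nonneg : ∀ k i, 0 ≤ aa k i := by
  intro k
  induction k with
  | zero => intro i; cases i <;> simp [aa]
  | succ k ih =>
    intro i
    cases i with
    | zero => simp [aa_zero]
    | succ i =>
      have h1 := ih i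
      have h2 := ih (i+1)
      rw [aa_succ]
      positivity

lemma aa_eq_zero : ∀ k i, k < i → aa k i = 0 := by
  intro k
  induction k with
  | zero => intro i hi; cases i with | zero => omega | succ i => simp [aa]
  | succ k ih =>
    intro i hi
    cases i with
    | zero => omega
    | succ i =>
      rw [aa_succ, ih i (by omega), ih (i+1) (by omega)]
      ring

lemma aa_val : ∀ m j, j ≤ m →
    ((Nat.factorial (j+1) : ℝ)) * aa (m+1) (j+1)
      = (Nat.factorial (m+1) : ℝ) * (m.choose j : ℝ) := by
  intro m
  induction m with
  | zero =>
    intro j hj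
    interval_cases j
    simp [aa]
  | succ m ih =>
    intro j hj
    cases j with
    | zero =>
      have h1 := ih 0 (Nat.zero_le m)
      rw [show (m:ℕ)+1+1 = (m+1)+1 from rfl, aa_succ, aa_zero]
      rw [Nat.choose_zero_right] at h1 ⊢
      rw [Nat.factorial_succ (m+1)]
      push_cast at h1 ⊢
      nlinarith [h1]
    | succ j =>
      have hjm : j ≤ m := by omega
      have h1 := ih j hjm
      rw [show (m:ℕ)+1+1 = (m+1)+1 from rfl, aa_succ (m+1) (j+1)]
      by_cases hj2 : j + 1 ≤ m
      · have h2 := ih (j+1) hj2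
        have hch := congrArg (Nat.cast (R := ℝ)) (Nat.choose_succ_right_eq m j)
        push_cast [Nat.cast_sub hjm] at hch
        have hps : ((m+1).choose (j+1) : ℝ) = (m.choose j : ℝ) + (m.choose (j+1) : ℝ) := by
          rw [Nat.choose_succ_succ]; push_cast; ring
        rw [hps]
        rw [Nat.factorial_succ (j+1)] at h2 ⊢
        rw [Nat.factorial_succ (m+1)]
        push_cast at h1 h2 ⊢
        linear_combination ((j:ℝ)+2) * h1 + ((m:ℝ)+(j:ℝ)+3) * h2
          + ((Nat.factorial (m+1) : ℝ)) * hch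
      · have hjm' : j = m := by omega
        subst hjm'
        have hz : aa (j+1) (j+2) = 0 := aa_eq_zero _ _ (by omega)
        rw [hz]
        have h1 := ih j le_rfl
        rw [Nat.choose_self] at h1 ⊢
        have hfp : (0:ℝ) < ((j+1).factorial : ℝ) := by exact_mod_cast Nat.factorial_pos (j+1)
        push_cast at h1 ⊢
        nlinarith [h1, hfp]

noncomputable def SS (k : ℕ) (y : ℝ) : ℝ :=
  ∑ i ∈ Finset.range (k+1), (-1:ℝ)^(k-i) * aa k i * y ^ (-((k:ℤ)+i))

lemma SS_recur (k : ℕ) (y : ℝ) (hy : 0 < y) :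
    (1/y^2) * SS k y
    + (∑ i ∈ Finset.range (k+1),
        (-1:ℝ)^(k-i) * aa k i * ((((-((k:ℤ)+i)) : ℤ) : ℝ) * y ^ (-((k:ℤ)+i) - 1)))
    = SS (k+1) y := by
  have hyne : y ≠ 0 := ne_of_gt hy
  have hA : (1/y^2) * SS k y = ∑ i ∈ Finset.range (k+1),
      (-1:ℝ)^(k-i) * aa k i * y ^ (-((k:ℤ)+1+(i+1))) := by
    rw [SS, Finset.mul_sum]
    refine Finset.sum_congr rfl (fun i _ => ?_)
    have h2 : (1:ℝ)/y^2 = y ^ (-2:ℤ) := by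
      rw [show (-2:ℤ) = -((2:ℕ):ℤ) by norm_num, zpow_neg, zpow_natCast, one_div]
    rw [h2, show -((k:ℤ)+1+((i:ℤ)+1)) = -((k:ℤ)+(i:ℤ)) + (-2) by ring, zpow_add₀ hyne]
    ring
  have hB : (∑ i ∈ Finset.range (k+1),
        (-1:ℝ)^(k-i) * aa k i * ((((-((k:ℤ)+i)) : ℤ) : ℝ) * y ^ (-((k:ℤ)+i) - 1)))
      = ∑ i ∈ Finset.range k,
        (-1:ℝ)^(k-i) * (((k:ℝ)+i+1) * aa k (i+1)) * y ^ (-((k:ℤ)+1+(i+1))) := by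
    rw [Finset.sum_range_succ']
    simp only [Nat.cast_zero]
    have hg0 : (-1:ℝ)^(k-0) * aa k 0 * ((((-((k:ℤ)+0)) : ℤ) : ℝ) * y ^ (-((k:ℤ)+0) - 1)) = 0 := by
      cases k with
      | zero => norm_num
      | succ k => rw [aa_zero]; ring
    rw [hg0, add_zero]
    refine Finset.sum_congr rfl (fun i hi => ?_)
    have hik : i < k := Finset.mem_range.mp hi
    have hks : k - i = (k - (i+1)) + 1 := by omega
    have hexp : -((k:ℤ)+(i+1:ℕ)) - 1 = -((k:ℤ)+1+(i+1)) := by push_cast; ring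
    rw [hexp, hks, pow_succ]
    push_cast
    ring
  have hC : SS (k+1) y = ∑ i ∈ Finset.range (k+1),
      ((-1:ℝ)^(k-i) * aa k i * y ^ (-((k:ℤ)+1+(i+1)))
        + (-1:ℝ)^(k-i) * (((k:ℝ)+i+1) * aa k (i+1)) * y ^ (-((k:ℤ)+1+(i+1)))) := by
    rw [SS, Finset.sum_range_succ']
    simp only [Nat.cast_zero]
    rw [show (-1:ℝ)^(k+1-0) * aa (k+1) 0 * y ^ (-(((k+1:ℕ):ℤ)+0)) = 0 by rw [aa_zero]; ring,
      add_zero]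
    refine Finset.sum_congr rfl (fun i hi => ?_)
    have hks : k + 1 - (i+1) = k - i := by omega
    have hexp : -(((k+1:ℕ):ℤ)+((i+1:ℕ):ℤ)) = -((k:ℤ)+1+(i+1)) := by push_cast; ring
    rw [hks, aa_succ, hexp]
    push_cast
    ring
  rw [hA, hB, hC, Finset.sum_add_distrib, Finset.sum_range_succ (fun i =>
      (-1:ℝ)^(k-i) * (((k:ℝ)+i+1) * aa k (i+1)) * y ^ (-((k:ℤ)+1+(i+1)))),
    aa_eq_zero k (k+1) (by omega)]
  ring

lemma deriv_formula : ∀ k, ∀ y : ℝ, 0 < y →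
    iteratedDeriv k (fun t : ℝ => Real.exp (-1/t)) y = Real.exp (-1/y) * SS k y := by
  intro k
  induction k with
  | zero =>
    intro y hy
    simp [SS, aa]
  | succ k ih =>
    intro y hy
    rw [iteratedDeriv_succ]
    have hev : (iteratedDeriv k (fun t : ℝ => Real.exp (-1/t)))
        =ᶠ[nhds y] (fun t => Real.exp (-1/t) * SS k t) := by
      filter_upwards [isOpen_Ioi.mem_nhds (show y ∈ Set.Ioi (0:ℝ) from hy)] with t ht
      exact ih t ht
    rw [hev.deriv_eq]
    have hyne : y ≠ 0 := ne_of_gt hy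
    have hexp : HasDerivAt (fun t : ℝ => Real.exp (-1/t))
        (Real.exp (-1/y) * (1/y^2)) y := by
      have h1 : HasDerivAt (fun t : ℝ => -1/t) (1/y^2) y := by
        have := (hasDerivAt_inv hyne).fun_neg
        simp only [neg_div, one_div] at *
        convert this using 1
        · rfl
        · rfl
        · ring
      exact h1.exp
    have hS : HasDerivAt (fun t : ℝ => SS k t)
        (∑ i ∈ Finset.range (k+1),
          (-1:ℝ)^(k-i) * aa k i * ((((-((k:ℤ)+i)) : ℤ) : ℝ) * y ^ (-((k:ℤ)+i) - 1))) y := by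
      apply HasDerivAt.fun_sum
      intro i _
      exact (hasDerivAt_zpow (-((k:ℤ)+i)) y (Or.inl hyne)).const_mul _
    have hprod := hexp.fun_mul hS
    rw [hprod.deriv]
    have key := SS_recur k y hy
    calc Real.exp (-1/y) * (1/y^2) * SS k y
        + Real.exp (-1/y) * (∑ i ∈ Finset.range (k+1),
          (-1:ℝ)^(k-i) * aa k i * ((((-((k:ℤ)+i)) : ℤ) : ℝ) * y ^ (-((k:ℤ)+i) - 1)))
        = Real.exp (-1/y) * ((1/y^2) * SS k y + (∑ i ∈ Finset.range (k+1),
          (-1:ℝ)^(k-i) * aa k i * ((((-((k:ℤ)+i)) : ℤ) : ℝ) * y ^ (-((k:ℤ)+i) - 1)))) := by ring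
    _ = Real.exp (-1/y) * SS (k+1) y := by rw [key]

lemma SS_shift (m : ℕ) (y : ℝ) : SS (m+1) y
    = ∑ j ∈ Finset.range (m+1),
        (-1:ℝ)^(m-j) * aa (m+1) (j+1) * y ^ (-(((m+1:ℕ):ℤ)+((j+1:ℕ):ℤ))) := by
  rw [SS, Finset.sum_range_succ']
  simp only [Nat.cast_zero]
  rw [show (-1:ℝ)^(m+1-0) * aa (m+1) 0 * y ^ (-(((m+1:ℕ):ℤ)+0)) = 0 by rw [aa_zero]; ring,
    add_zero]
  refine Finset.sum_congr rfl (fun j _ => ?_)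
  rw [show m + 1 - (j+1) = m - j by omega]

lemma exp_pow_bound (m : ℕ) (hm : 1 ≤ m) (x : ℝ) (hx : 0 < x) :
    x ^ m * Real.exp (-x) ≤ ((m:ℝ) / Real.exp 1) ^ m := by
  have hm' : (0:ℝ) < m := by exact_mod_cast hm
  have h1 : x ≤ m * Real.exp (x/m - 1) := by
    have h := Real.add_one_le_exp (x/m - 1)
    have : x/m ≤ Real.exp (x/m - 1) := by linarith
    calc x = m * (x/m) := by field_simp
    _ ≤ m * Real.exp (x/m - 1) := by
        exact mul_le_mul_of_nonneg_left this (le_of_lt hm')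
  have h2 : x ^ m ≤ ((m:ℝ) * Real.exp (x/m - 1)) ^ m :=
    pow_le_pow_left₀ (le_of_lt hx) h1 m
  have h3 : ((m:ℝ) * Real.exp (x/m - 1)) ^ m = (m:ℝ)^m * Real.exp (x - m) := by
    rw [mul_pow, ← Real.exp_nat_mul]
    congr 2
    field_simp
  have h4 : x ^ m * Real.exp (-x) ≤ (m:ℝ)^m * Real.exp (x - m) * Real.exp (-x) := by
    apply mul_le_mul_of_nonneg_right _ (le_of_lt (Real.exp_pos _))
    rw [← h3]; exact h2
  calc x ^ m * Real.exp (-x) ≤ (m:ℝ)^m * Real.exp (x - m) * Real.exp (-x) := h4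
  _ = (m:ℝ)^m * Real.exp (-(m:ℝ)) := by
      rw [mul_assoc, ← Real.exp_add]; congr 2; ring
  _ = ((m:ℝ) / Real.exp 1) ^ m := by
      rw [div_pow, ← Real.exp_nat_mul, mul_one, Real.exp_neg]
      rw [div_eq_mul_inv]

/-- Intermediate bound:
`sup_{y>0} (y/(1+y))^k |d^k/dy^k e^{−1/y}| ≤ k! Σ_{j=0}^{k−1} (1/(j+1)!) C(k−1,j) ((j+1)/e)^{j+1}`. -/
theorem weighted_deriv_exp_neg_inv_intermediate (k : ℕ) (hk : 1 ≤ k) (y : ℝ) (hy : 0 < y) :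
    (y / (1 + y)) ^ k * |iteratedDeriv k (fun t : ℝ => Real.exp (-1 / t)) y| ≤
      (Nat.factorial k : ℝ) *
        ∑ j ∈ Finset.range k,
          (1 / (Nat.factorial (j + 1) : ℝ)) * ((k - 1).choose j : ℝ) *
            (((j : ℝ) + 1) / Real.exp 1) ^ (j + 1) := by
  obtain ⟨m, rfl⟩ : ∃ m, k = m + 1 := ⟨k - 1, by omega⟩
  have hyne : y ≠ 0 := ne_of_gt hy
  simp only [Nat.add_sub_cancel]
  rw [deriv_formula (m+1) y hy, SS_shift]
  have hwpos : (0:ℝ) ≤ (y / (1+y))^(m+1) := by positivity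
  have hexp_pos : (0:ℝ) < Real.exp (-1/y) := Real.exp_pos _
  -- bound the absolute value
  have habs : |Real.exp (-1/y) * ∑ j ∈ Finset.range (m+1),
        (-1:ℝ)^(m-j) * aa (m+1) (j+1) * y ^ (-(((m+1:ℕ):ℤ)+((j+1:ℕ):ℤ)))|
      ≤ Real.exp (-1/y) * ∑ j ∈ Finset.range (m+1),
        aa (m+1) (j+1) * y ^ (-(((m+1:ℕ):ℤ)+((j+1:ℕ):ℤ))) := by
    rw [abs_mul, Real.abs_exp]
    apply mul_le_mul_of_nonneg_left _ (le_of_lt hexp_pos)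
    refine le_trans (Finset.abs_sum_le_sum_abs _ _) (Finset.sum_le_sum fun j _ => ?_)
    rw [abs_mul, abs_mul, abs_pow, abs_neg, abs_one, one_pow, one_mul,
      abs_of_nonneg (aa_nonneg _ _), abs_of_pos (zpow_pos hy _)]
  calc (y / (1+y))^(m+1) * |Real.exp (-1/y) * ∑ j ∈ Finset.range (m+1),
        (-1:ℝ)^(m-j) * aa (m+1) (j+1) * y ^ (-(((m+1:ℕ):ℤ)+((j+1:ℕ):ℤ)))|
      ≤ (y / (1+y))^(m+1) * (Real.exp (-1/y) * ∑ j ∈ Finset.range (m+1),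
        aa (m+1) (j+1) * y ^ (-(((m+1:ℕ):ℤ)+((j+1:ℕ):ℤ)))) :=
        mul_le_mul_of_nonneg_left habs hwpos
  _ = ∑ j ∈ Finset.range (m+1), aa (m+1) (j+1) *
        ((y / (1+y))^(m+1) * Real.exp (-1/y) * y ^ (-(((m+1:ℕ):ℤ)+((j+1:ℕ):ℤ)))) := by
      rw [Finset.mul_sum, Finset.mul_sum]
      exact Finset.sum_congr rfl fun j _ => by ring
  _ ≤ ∑ j ∈ Finset.range (m+1), aa (m+1) (j+1) * (((j:ℝ)+1) / Real.exp 1) ^ (j+1) := by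
      refine Finset.sum_le_sum fun j _ => ?_
      apply mul_le_mul_of_nonneg_left _ (aa_nonneg _ _)
      -- termwise bound
      have hw : (y / (1+y))^(m+1) ≤ y^(m+1) := by
        apply pow_le_pow_left₀ (by positivity)
        apply div_le_self (le_of_lt hy)
        linarith
      have hy2 : y^(m+1) * y ^ (-(((m+1:ℕ):ℤ)+((j+1:ℕ):ℤ))) = (1/y)^(j+1) := by
        rw [← zpow_natCast y (m+1), ← zpow_add₀ hyne,
          show ((m+1:ℕ):ℤ) + (-(((m+1:ℕ):ℤ)+((j+1:ℕ):ℤ))) = -((j+1:ℕ):ℤ) by ring,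
          zpow_neg, zpow_natCast, one_div, inv_pow]
      have hb := exp_pow_bound (j+1) (by omega) (1/y) (by positivity)
      calc (y / (1+y))^(m+1) * Real.exp (-1/y) * y ^ (-(((m+1:ℕ):ℤ)+((j+1:ℕ):ℤ)))
          ≤ y^(m+1) * Real.exp (-1/y) * y ^ (-(((m+1:ℕ):ℤ)+((j+1:ℕ):ℤ))) := by
            apply mul_le_mul_of_nonneg_right _ (le_of_lt (zpow_pos hy _))
            exact mul_le_mul_of_nonneg_right hw (le_of_lt hexp_pos)
      _ = (1/y)^(j+1) * Real.exp (-(1/y)) := by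
            rw [← hy2, neg_div]
            ring
      _ ≤ (((j+1:ℕ):ℝ) / Real.exp 1) ^ (j+1) := hb
      _ = (((j:ℝ)+1) / Real.exp 1) ^ (j+1) := by push_cast; ring
  _ = (Nat.factorial (m+1) : ℝ) * ∑ j ∈ Finset.range (m+1),
        (1 / (Nat.factorial (j + 1) : ℝ)) * ((m).choose j : ℝ) *
          (((j : ℝ) + 1) / Real.exp 1) ^ (j + 1) := by
      rw [Finset.mul_sum]
      refine Finset.sum_congr rfl fun j hj => ?_
      have hjm : j ≤ m := by have := Finset.mem_range.mp hj; omega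
      have hv := aa_val m j hjm
      have hfp : (0:ℝ) < ((j+1).factorial : ℝ) := by exact_mod_cast Nat.factorial_pos (j+1)
      have haa : aa (m+1) (j+1)
          = (Nat.factorial (m+1) : ℝ) * ((m).choose j : ℝ) / ((j+1).factorial : ℝ) := by
        field_simp at hv ⊢
        linarith [hv]
      rw [haa]
      field_simp
end

section
/- For every integer k ≥ 1, sup_{y>0} (y/(1+y))^k |d^k/dy^k e^{−1/y}| ≤ 2^{k−1} · k!. In particular, the shear flow U₀(y) = e^{−1/y} satisfies the condition sup_{y>0} (y/(1+y))^k |U₀^{(k)}(y)| ≤ C^{k+1} k! for all k ≥ 0 with constant C = 2. -/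
open Finset Real

noncomputable def expCoef : ℕ → ℕ → ℝ
  | 0, _ => 0
  | 1, j => if j = 0 then 1 else 0
  | (k+2), j => expCoef (k+1) j +
      ((j : ℝ) - 1 - 2*(k+1)) * (if j = 0 then 0 else expCoef (k+1) (j-1))

lemma expCoef_eq_zero : ∀ k j, k ≤ j → expCoef k j = 0 := by
  intro k
  induction k with
  | zero => intro j _; rfl
  | succ k ih =>
    intro j hj
    match k, ih with
    | 0, _ =>
      have : j ≠ 0 := by omega
      simp [expCoef, this]
    | (k+1), ih =>
      have h1 : expCoef (k+1) j = 0 := ih j (by omega)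
      have h2 : j ≠ 0 := by omega
      have h3 : expCoef (k+1) (j-1) = 0 := ih (j-1) (by omega)
      simp [expCoef, h1, h2, h3]

/-- the key combinatorial identity (as an inequality), in ℕ:
for `i ≤ k`,
`choose k (i+1) * (k+1-i) + (2k+2-i) * choose k i ≤ (k+2) * choose (k+1) (i+1)`. -/
lemma coef_rec_ineq (k i : ℕ) (hik : i ≤ k) :
    k.choose (i+1) * (k+1-i) + (2*k+2-i) * k.choose i ≤ (k+2) * (k+1).choose (i+1) := by
  obtain ⟨d, rfl⟩ : ∃ d, k = i + d := ⟨k - i, by omega⟩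
  have pascal : (i+d+1).choose (i+1) = (i+d).choose i + (i+d).choose (i+1) :=
    Nat.choose_succ_succ (i+d) i
  have h1 : (i+d).choose (i+1) * (i+1) = (i+d).choose i * d := by
    have := Nat.choose_succ_right_eq (i+d) i
    simpa using this
  have e1 : i + d + 1 - i = d + 1 := by omega
  have e2 : 2*(i+d) + 2 - i = i + 2*d + 2 := by omega
  rw [e1, e2, pascal]
  nlinarith [h1]

lemma expCoef_abs_le : ∀ k j, 1 ≤ k →
    |expCoef k j| ≤ ((k-1).choose j : ℝ) * (k.descFactorial j : ℝ) := by
  intro k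
  induction k with
  | zero => intro j h; omega
  | succ k ih =>
    intro j _
    match k, ih with
    | 0, _ =>
      by_cases hj : j = 0
      · subst hj; simp [expCoef]
      · simp [expCoef, hj]
        positivity
    | (k+1), ih =>
      by_cases hjk : k+2 ≤ j
      · rw [expCoef_eq_zero _ _ hjk]
        simp
        positivity
      · push_neg at hjk
        by_cases hj : j = 0
        · subst hj
          show |expCoef (k+2) 0| ≤ _
          rw [expCoef]
          simp only [if_true, mul_zero, zero_mul, add_zero, if_pos rfl, Nat.cast_zero]
          calc |expCoef (k+1) 0| ≤ ((k).choose 0 : ℝ) * ((k+1).descFactorial 0 : ℝ) :=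
                ih 0 (by omega)
            _ ≤ _ := by simp
        · obtain ⟨i, rfl⟩ : ∃ i, j = i + 1 := ⟨j - 1, by omega⟩
          have hik : i ≤ k := by omega
          have hicast : (i:ℝ) ≤ k := by exact_mod_cast hik
          show |expCoef (k+2) (i+1)| ≤ _
          rw [expCoef]
          rw [if_neg (Nat.succ_ne_zero i)]
          simp only [Nat.add_sub_cancel]
          have hA : (0:ℝ) ≤ 2*(k:ℝ)+2-i := by linarith
          have habs : |expCoef (k+1) (i+1) + (((i+1 : ℕ) : ℝ) - 1 - 2*((k:ℝ)+1)) * expCoef (k+1) i|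
              ≤ |expCoef (k+1) (i+1)| + (2*(k:ℝ)+2-i) * |expCoef (k+1) i| := by
            refine (abs_add_le _ _).trans ?_
            gcongr
            rw [abs_mul]
            gcongr
            rw [abs_le]
            push_cast
            constructor <;> linarith
          refine le_trans (le_trans (by push_cast; exact le_of_eq rfl) habs) ?_
          have b1 := ih (i+1) (by omega)
          have b2 := ih i (by omega)
          simp only [Nat.add_sub_cancel] at b1 b2
          set D : ℝ := ((k+1).descFactorial i : ℝ) with hD
          have hDnn : (0:ℝ) ≤ D := by positivity
          have d1R : (((k+1).descFactorial (i+1) : ℕ) : ℝ) = ((k:ℝ)+1-i) * D := by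
            rw [Nat.descFactorial_succ, hD]
            push_cast [Nat.cast_sub (show i ≤ k+1 by omega)]
            ring
          have d2R : (((k+2).descFactorial (i+1) : ℕ) : ℝ) = ((k:ℝ)+2) * D := by
            rw [Nat.succ_descFactorial_succ (k+1) i, hD]
            push_cast
            ring
          have keyR : ((k.choose (i+1) : ℕ) : ℝ) * ((k:ℝ)+1-i)
                + (2*(k:ℝ)+2-i) * ((k.choose i : ℕ) : ℝ)
              ≤ ((k:ℝ)+2) * (((k+1).choose (i+1) : ℕ) : ℝ) := by
            have := coef_rec_ineq k i hik
            have hc : (((k+1-i : ℕ)) : ℝ) = (k:ℝ)+1-i := by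
              rw [Nat.cast_sub (show i ≤ k+1 by omega)]; push_cast; ring
            have hc2 : (((2*k+2-i : ℕ)) : ℝ) = 2*(k:ℝ)+2-i := by
              push_cast [Nat.cast_sub (show i ≤ 2*k+2 by omega)]; ring
            calc ((k.choose (i+1) : ℕ) : ℝ) * ((k:ℝ)+1-i) + (2*(k:ℝ)+2-i) * ((k.choose i : ℕ) : ℝ)
                = ((k.choose (i+1) * (k+1-i) + (2*k+2-i) * k.choose i : ℕ) : ℝ) := by
                  push_cast [hc, hc2]; ring
              _ ≤ (((k+2) * (k+1).choose (i+1) : ℕ) : ℝ) := by exact_mod_cast this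
              _ = _ := by push_cast; ring
          calc |expCoef (k+1) (i+1)| + (2*(k:ℝ)+2-i) * |expCoef (k+1) i|
              ≤ ((k.choose (i+1) : ℕ) : ℝ) * (((k+1).descFactorial (i+1) : ℕ) : ℝ)
                + (2*(k:ℝ)+2-i) * (((k.choose i : ℕ) : ℝ) * (((k+1).descFactorial i : ℕ) : ℝ)) := by
                gcongr
            _ = (((k.choose (i+1) : ℕ) : ℝ) * ((k:ℝ)+1-i)
                + (2*(k:ℝ)+2-i) * ((k.choose i : ℕ) : ℝ)) * D := by
                rw [d1R]; ring
            _ ≤ (((k:ℝ)+2) * (((k+1).choose (i+1) : ℕ) : ℝ)) * D :=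
                mul_le_mul_of_nonneg_right keyR hDnn
            _ = _ := by rw [d2R]; ring

lemma hasDerivAt_exp_neg_inv {y : ℝ} (hy : y ≠ 0) :
    HasDerivAt (fun t : ℝ => Real.exp (-1 / t)) (Real.exp (-1 / y) * (y ^ 2)⁻¹) y := by
  have h1 : HasDerivAt (fun t : ℝ => -1 / t) ((y ^ 2)⁻¹) y := by
    have := (hasDerivAt_inv hy).neg
    simpa [neg_div, one_div, Pi.neg_def] using this.congr_deriv (by ring)
  exact (Real.hasDerivAt_exp (-1 / y)).comp y h1

lemma iteratedDeriv_expansion (k : ℕ) (y : ℝ) (hy : 0 < y) :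
    iteratedDeriv (k+1) (fun t : ℝ => Real.exp (-1 / t)) y =
      Real.exp (-1 / y) *
        ∑ j ∈ range (k+1), expCoef (k+1) j * y ^ ((j : ℤ) - 2*(k+1)) := by
  induction k generalizing y with
  | zero =>
    rw [iteratedDeriv_one, (hasDerivAt_exp_neg_inv hy.ne').deriv]
    simp [expCoef]
  | succ k ih =>
    rw [iteratedDeriv_succ]
    have hev : iteratedDeriv (k+1) (fun t : ℝ => Real.exp (-1 / t)) =ᶠ[nhds y]
        (fun z => Real.exp (-1 / z) *
          ∑ j ∈ range (k+1), expCoef (k+1) j * z ^ ((j : ℤ) - 2*(k+1))) := by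
      filter_upwards [IsOpen.mem_nhds isOpen_Ioi (Set.mem_Ioi.2 hy)] with z hz
      exact ih z hz
    rw [hev.deriv_eq]
    have hS : HasDerivAt (fun z : ℝ => ∑ j ∈ range (k+1), expCoef (k+1) j * z ^ ((j : ℤ) - 2*(k+1)))
        (∑ j ∈ range (k+1), expCoef (k+1) j * (((j : ℤ) - 2*(k+1) : ℤ) : ℝ) * y ^ ((j : ℤ) - 2*(k+1) - 1)) y := by
      apply HasDerivAt.fun_sum
      intro j hj
      have := (hasDerivAt_zpow ((j : ℤ) - 2*(k+1)) y (Or.inl hy.ne')).const_mul (expCoef (k+1) j)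
      simpa [mul_assoc] using this
    have hprod := (hasDerivAt_exp_neg_inv hy.ne').fun_mul hS
    rw [hprod.deriv]
    have key : ∑ j ∈ range (k+1+1), expCoef (k+1+1) j * y ^ ((j : ℤ) - 2*(k+1+1))
        = (y^2)⁻¹ * (∑ j ∈ range (k+1), expCoef (k+1) j * y ^ ((j : ℤ) - 2*(k+1)))
          + ∑ j ∈ range (k+1), expCoef (k+1) j * (((j : ℤ) - 2*(k+1) : ℤ) : ℝ) * y ^ ((j : ℤ) - 2*(k+1) - 1) := by
      have hsplit : ∀ j : ℕ, expCoef (k+1+1) j * y ^ ((j : ℤ) - 2*(k+1+1))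
          = expCoef (k+1) j * y ^ ((j : ℤ) - 2*(k+2))
            + (((j : ℝ) - 1 - 2*(k+1)) * (if j = 0 then 0 else expCoef (k+1) (j-1))) * y ^ ((j : ℤ) - 2*(k+2)) := by
        intro j
        show expCoef (k+2) j * _ = _
        rw [expCoef]
        ring_nf
      rw [Finset.sum_congr rfl (fun j _ => hsplit j), Finset.sum_add_distrib]
      congr 1
      · rw [Finset.sum_range_succ, expCoef_eq_zero (k+1) (k+1) le_rfl, Finset.mul_sum]
        simp only [zero_mul, add_zero]
        apply Finset.sum_congr rfl
        intro j hj
        rw [show ((j:ℤ) - 2*(k+2)) = (-2) + ((j:ℤ) - 2*(k+1)) by ring,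
          zpow_add₀ hy.ne']
        rw [show ((-2:ℤ)) = -(2:ℕ) by norm_num, zpow_neg, zpow_natCast]
        ring
      · rw [Finset.sum_range_succ']
        simp only [if_true, mul_zero, zero_mul, add_zero]
        apply Finset.sum_congr rfl
        intro i hi
        rw [if_neg (Nat.succ_ne_zero i)]
        rw [show (((i+1 : ℕ):ℤ) - 2*(k+2)) = ((i:ℤ) - 2*(k+1)) - 1 by push_cast; ring]
        simp only [Nat.add_sub_cancel]
        push_cast
        ring
    rw [show ((k+1:ℕ):ℤ) = (k:ℤ)+1 by push_cast; ring, key]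
    ring

lemma weighted_term_le {m j : ℕ} (hj : j ≤ m) {y : ℝ} (hy : 0 < y) :
    (y/(1+y))^(m+1) * (Real.exp (-1/y) * y ^ ((j:ℤ) - 2*(m+1)))
      ≤ ((m+1-j).factorial : ℝ) := by
  have hyp : (0:ℝ) < 1 + y := by linarith
  have h1 : (y/(1+y))^(m+1) ≤ y^(m+1) := by
    apply pow_le_pow_left₀ (by positivity)
    rw [div_le_iff₀ hyp]
    nlinarith
  have hzp : (0:ℝ) < Real.exp (-1/y) * y ^ ((j:ℤ) - 2*(m+1)) := by positivity
  have step : (y/(1+y))^(m+1) * (Real.exp (-1/y) * y ^ ((j:ℤ) - 2*(m+1)))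
      ≤ y^(m+1) * (Real.exp (-1/y) * y ^ ((j:ℤ) - 2*(m+1))) := by
    exact mul_le_mul_of_nonneg_right h1 hzp.le
  refine step.trans ?_
  set n : ℕ := m + 1 - j with hn
  have hne : ((j:ℤ) - 2*(m+1)) = -(n:ℤ) - ((m+1 : ℕ) : ℤ) := by
    rw [hn]; push_cast [Nat.cast_sub (show j ≤ m+1 by omega)]; ring
  have hrw : y^(m+1) * (Real.exp (-1/y) * y ^ ((j:ℤ) - 2*(m+1)))
      = Real.exp (-1/y) * (y^n)⁻¹ := by
    rw [hne, zpow_sub₀ hy.ne', zpow_neg, zpow_natCast, zpow_natCast]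
    field_simp
  rw [hrw]
  have hkey : (1/y)^n / (n.factorial : ℝ) ≤ Real.exp (1/y) :=
    Real.pow_div_factorial_le_exp (1/y) (by positivity) n
  have hfac : (0:ℝ) < (n.factorial : ℝ) := by exact_mod_cast n.factorial_pos
  have h2 : (y^n)⁻¹ ≤ (n.factorial : ℝ) * Real.exp (1/y) := by
    rw [div_le_iff₀ hfac] at hkey
    calc (y^n)⁻¹ = (1/y)^n := by rw [one_div, inv_pow]
      _ ≤ Real.exp (1/y) * n.factorial := hkey
      _ = _ := by ring
  calc Real.exp (-1/y) * (y^n)⁻¹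
      ≤ Real.exp (-1/y) * ((n.factorial : ℝ) * Real.exp (1/y)) := by
        exact mul_le_mul_of_nonneg_left h2 (Real.exp_pos _).le
    _ = (n.factorial : ℝ) * (Real.exp (-1/y) * Real.exp (1/y)) := by ring
    _ = (n.factorial : ℝ) := by
        rw [← Real.exp_add, show (-1/y + 1/y : ℝ) = 0 by ring, Real.exp_zero, mul_one]

lemma main_bound (k : ℕ) (hk : 1 ≤ k) (y : ℝ) (hy : 0 < y) :
    (y / (1 + y)) ^ k * |iteratedDeriv k (fun t : ℝ => Real.exp (-1 / t)) y| ≤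
      2 ^ (k - 1) * (Nat.factorial k : ℝ) := by
  obtain ⟨m, rfl⟩ : ∃ m, k = m + 1 := ⟨k - 1, by omega⟩
  rw [iteratedDeriv_expansion m y hy]
  simp only [Nat.add_sub_cancel]
  have hyp : (0:ℝ) < 1 + y := by linarith
  have hwnn : (0:ℝ) ≤ (y/(1+y))^(m+1) := by positivity
  calc (y/(1+y))^(m+1) * |Real.exp (-1/y) * ∑ j ∈ range (m+1), expCoef (m+1) j * y ^ ((j:ℤ) - 2*(m+1))|
      ≤ (y/(1+y))^(m+1) * (Real.exp (-1/y) * ∑ j ∈ range (m+1), |expCoef (m+1) j| * y ^ ((j:ℤ) - 2*(m+1))) := by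
        apply mul_le_mul_of_nonneg_left ?_ hwnn
        rw [abs_mul, Real.abs_exp]
        apply mul_le_mul_of_nonneg_left ?_ (Real.exp_pos _).le
        refine (Finset.abs_sum_le_sum_abs _ _).trans ?_
        apply Finset.sum_le_sum
        intro j hj
        rw [abs_mul, abs_of_pos (zpow_pos hy _)]
    _ = ∑ j ∈ range (m+1), |expCoef (m+1) j| * ((y/(1+y))^(m+1) * (Real.exp (-1/y) * y ^ ((j:ℤ) - 2*(m+1)))) := by
        simp only [Finset.mul_sum]
        apply Finset.sum_congr rfl
        intro j hj
        ring
    _ ≤ ∑ j ∈ range (m+1), (m.choose j : ℝ) * ((m+1).factorial : ℝ) := by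
        apply Finset.sum_le_sum
        intro j hj
        have hjm : j ≤ m := by
          have := Finset.mem_range.mp hj; omega
        have hc := expCoef_abs_le (m+1) j (by omega)
        simp only [Nat.add_sub_cancel] at hc
        have hw := weighted_term_le hjm hy
        have hwpos : (0:ℝ) ≤ (y/(1+y))^(m+1) * (Real.exp (-1/y) * y ^ ((j:ℤ) - 2*(m+1))) := by
          positivity
        calc |expCoef (m+1) j| * ((y/(1+y))^(m+1) * (Real.exp (-1/y) * y ^ ((j:ℤ) - 2*(m+1))))
            ≤ ((m.choose j : ℝ) * ((m+1).descFactorial j : ℝ)) * ((m+1-j).factorial : ℝ) := by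
              exact mul_le_mul hc hw hwpos (by positivity)
          _ = (m.choose j : ℝ) * (((m+1-j).factorial * (m+1).descFactorial j : ℕ) : ℝ) := by
              push_cast; ring
          _ = (m.choose j : ℝ) * ((m+1).factorial : ℝ) := by
              rw [Nat.factorial_mul_descFactorial (show j ≤ m+1 by omega)]
    _ = 2 ^ m * ((m+1).factorial : ℝ) := by
        rw [← Finset.sum_mul]
        congr 1
        rw [← Nat.cast_sum]
        rw [Nat.sum_range_choose]
        push_cast; ring

/-- `sup_{y>0} (y/(1+y))^k |d^k/dy^k e^{−1/y}| ≤ 2^{k−1} k!` for `k ≥ 1`; in particular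
`U₀(y) = e^{−1/y}` satisfies `sup_{y>0} (y/(1+y))^k |U₀^{(k)}(y)| ≤ C^{k+1} k!` with `C = 2`. -/
theorem weighted_deriv_exp_neg_inv_bound :
    (∀ k : ℕ, 1 ≤ k → ∀ y : ℝ, 0 < y →
      (y / (1 + y)) ^ k * |iteratedDeriv k (fun t : ℝ => Real.exp (-1 / t)) y| ≤
        2 ^ (k - 1) * (Nat.factorial k : ℝ)) ∧
    (∀ k : ℕ, ∀ y : ℝ, 0 < y →
      (y / (1 + y)) ^ k * |iteratedDeriv k (fun t : ℝ => Real.exp (-1 / t)) y| ≤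
        2 ^ (k + 1) * (Nat.factorial k : ℝ)) := by
  constructor
  · exact main_bound
  · intro k y hy
    rcases Nat.eq_zero_or_pos k with (rfl | hk)
    · simp only [pow_zero, one_mul, iteratedDeriv_zero, Nat.factorial_zero, Nat.cast_one]
      rw [abs_of_pos (Real.exp_pos _)]
      have : Real.exp (-1/y) ≤ 1 := by
        rw [Real.exp_le_one_iff, neg_div]
        have : (0:ℝ) < 1/y := by positivity
        linarith
      linarith
    · refine (main_bound k hk y hy).trans ?_
      have h2 : (2:ℝ) ^ (k-1) ≤ 2 ^ (k+1) := by
        apply pow_le_pow_right₀ (by norm_num)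
        omega
      have : (0:ℝ) ≤ (k.factorial : ℝ) := by positivity
      exact mul_le_mul_of_nonneg_right h2 this
end
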